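/- An Nmatrix for a propositional language consists of a nonempty set V of truth values, a nonempty proper subset D ⊆ V of designated values, and for each n-ary connective a multifunction V^n → (nonempty subsets of V). Given the 4-valued Nmatrix M_KT with values {F, f, t, T}, designated values {t, T}, the implication multifunction of Table 2a restricted to these four values, ⊥̃ = {F}, and □̃ given by □̃(F) = {F}, □̃(f) = {F, f}, □̃(t) = {F, f}, □̃(T) = {T, t}, prove: every valuation v : Formulas → {F,f,t,T} compatible with M_KT assigns a designated value to every instance of the axiom T: □α → α. -/
import Mathlib


/-- Modal formulas: atoms, ⊥, implication, box. -/
inductive Fml : Type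
  | atom : ℕ → Fml
  | bot  : Fml
  | imp  : Fml → Fml → Fml
  | box  : Fml → Fml
deriving DecidableEq

namespace Fml
/-- ¬α := α → ⊥ -/
def neg (a : Fml) : Fml := imp a bot
/-- ◇α := ¬□¬α -/
def dia (a : Fml) : Fml := neg (box (neg a))
/-- classical conjunction: α ∧ β := ¬(α → ¬β) -/
def and (a b : Fml) : Fml := neg (imp a (neg b))
end Fml

/-- Hilbert system for a normal modal logic: classical propositional axioms,
the K axiom, extra axiom schemas `Ax`, modus ponens and necessitation. -/
inductive Thm (Ax : Fml → Prop) : Fml → Prop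
  | ax1 (a b : Fml) : Thm Ax (a.imp (b.imp a))
  | ax2 (a b c : Fml) : Thm Ax ((a.imp (b.imp c)).imp ((a.imp b).imp (a.imp c)))
  | ax3 (a : Fml) : Thm Ax ((a.neg.neg).imp a)
  | axK (a b : Fml) : Thm Ax (((a.imp b).box).imp ((a.box).imp (b.box)))
  | extra (a : Fml) : Ax a → Thm Ax a
  | mp {a b : Fml} : Thm Ax (a.imp b) → Thm Ax a → Thm Ax b
  | nec {a : Fml} : Thm Ax a → Thm Ax a.box

/-- Derivability from a set of hypotheses: theorems of the logic,
members of Δ, and modus ponens. -/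
inductive Deriv (Ax : Fml → Prop) (Δ : Set Fml) : Fml → Prop
  | thm {a : Fml} : Thm Ax a → Deriv Ax Δ a
  | mem {a : Fml} : a ∈ Δ → Deriv Ax Δ a
  | mp {a b : Fml} : Deriv Ax Δ (a.imp b) → Deriv Ax Δ a → Deriv Ax Δ b

/-- Δ is consistent: no formula is derivable together with its negation. -/
def Consistent (Ax : Fml → Prop) (Δ : Set Fml) : Prop :=
  ¬ ∃ γ, Deriv Ax Δ γ ∧ Deriv Ax Δ γ.neg

/-- Δ is maximally consistent. -/
def MaxConsistent (Ax : Fml → Prop) (Δ : Set Fml) : Prop :=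
  Consistent Ax Δ ∧ ∀ β, β ∉ Δ → ¬ Consistent Ax (insert β Δ)

/-- The four truth values of the KT family. -/
inductive V4 : Type
  | F | f | t | T
deriving DecidableEq

/-- The non-deterministic implication table restricted to {F,f,t,T}. -/
def imp4 : V4 → V4 → Set V4
  | .F, _  => {.T}
  | .f, .F => {.t}
  | .f, .f => {.T, .t}
  | .f, .t => {.T, .t}
  | .f, .T => {.T}
  | .t, .F => {.f}
  | .t, .f => {.f}
  | .t, .t => {.T, .t}
  | .t, .T => {.T}
  | .T, .F => {.F}
  | .T, .f => {.f}
  | .T, .t => {.t}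
  | .T, .T => {.T}

/-- Designated values. -/
def D4 : Set V4 := {.t, .T}

/-- The □ multifunction of the KT Nmatrix. -/
def boxKT : V4 → Set V4
  | .F => {.F}
  | .f => {.F, .f}
  | .t => {.F, .f}
  | .T => {.T, .t}

/-- A valuation compatible with the 4-valued Nmatrix M_KT (⊥̃ = {F}). -/
def ValKT (v : Fml → V4) : Prop :=
  v Fml.bot = .F ∧
  (∀ a b : Fml, v (a.imp b) ∈ imp4 (v a) (v b)) ∧
  (∀ a : Fml, v a.box ∈ boxKT (v a))

/-- every valuation compatible with M_KT designates every
instance of axiom T: □α → α. -/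
theorem stmt7 (v : Fml → V4) (hv : ValKT v) (α : Fml) :
    v ((α.box).imp α) ∈ D4 := by
  obtain ⟨-, himp, hbox⟩ := hv
  have h1 := himp α.box α
  have h2 := hbox α
  cases hα : v α <;> cases hb : v α.box <;>
    simp_all [imp4, boxKT, D4] <;> rcases h1 with h | h <;> simp_all
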